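/- Let n be a natural number, 0 < q < p < 1, let X₁, …, Xₙ be i.i.d. Bernoulli(p) and Y₁, …, Yₙ be i.i.d. Bernoulli(q), with all of X₁, …, Xₙ, Y₁, …, Yₙ mutually independent. Then for every real c > 0, P(Σᵢ Xᵢ − Σᵢ Yᵢ ≤ −c·n·(p−q)) ≤ exp(−c·n·(KL(p,q) + KL(q,p))). -/

import Mathlib

/-!
Chernoff's bound for `∑ Xᵢ - ∑ Yᵢ`, taken at the exponent `-L` where
`L = log (p (1 - q) / (q (1 - p)))` is the log-odds ratio. At this exponent the moment generating
functions of `Xᵢ` and of `-Yᵢ` are `(1 - p) / (1 - q)` and `(1 - q) / (1 - p)`, so the moment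
generating function of the difference is exactly `1` and the bound reduces to
`exp (-L c n (p - q))`; finally `(p - q) L = KL(p, q) + KL(q, p)`.
-/

open MeasureTheory ProbabilityTheory

/-- Kullback–Leibler divergence between Bernoulli(a) and Bernoulli(b). -/
noncomputable def KL (a b : ℝ) : ℝ :=
  a * Real.log (a / b) + (1 - a) * Real.log ((1 - a) / (1 - b))

open Real

lemma exp_mul_eq_one_add_indicator {Ω : Type*} {Z : Ω → ℝ} (h01 : ∀ ω, Z ω = 0 ∨ Z ω = 1)
    (t : ℝ) (ω : Ω) :
    exp (t * Z ω) = 1 + {ω | Z ω = 1}.indicator (fun _ => exp t - 1) ω := by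
  rcases h01 ω with h | h <;> simp [h]

section Bernoulli

variable {Ω : Type*} [MeasurableSpace Ω] {μ : Measure Ω} {Z : Ω → ℝ}

lemma mgf_of_eq_zero_or_eq_one [IsProbabilityMeasure μ] (hm : Measurable Z)
    (h01 : ∀ ω, Z ω = 0 ∨ Z ω = 1) (t : ℝ) :
    mgf Z μ t = 1 + (exp t - 1) * μ.real {ω | Z ω = 1} := by
  have hs : MeasurableSet {ω | Z ω = 1} := hm (measurableSet_singleton 1)
  simp_rw [mgf, exp_mul_eq_one_add_indicator h01 t]
  rw [integral_add (integrable_const 1) ((integrable_const _).indicator hs),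
    integral_indicator_const _ hs, integral_const, probReal_univ, smul_eq_mul, smul_eq_mul]
  ring

lemma integrable_exp_mul_of_eq_zero_or_eq_one [IsFiniteMeasure μ] (hm : Measurable Z)
    (h01 : ∀ ω, Z ω = 0 ∨ Z ω = 1) (t : ℝ) :
    Integrable (fun ω => exp (t * Z ω)) μ :=
  integrable_exp_mul_of_mem_Icc (a := 0) (b := 1) hm.aemeasurable <| ae_of_all _ fun ω => by
    rcases h01 ω with h | h <;> simp [h]

end Bernoulli

theorem ProbabilityTheory.iIndepFun.measureReal_sum_sub_sum_le_le {Ω ι κ : Type*}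
    [MeasurableSpace Ω] {μ : Measure Ω} [Fintype ι] [Fintype κ] {X : ι → Ω → ℝ} {Y : κ → Ω → ℝ}
    (hindep : iIndepFun (Sum.elim X Y) μ)
    (hXm : ∀ i, Measurable (X i)) (hYm : ∀ j, Measurable (Y j)) {t : ℝ} (ht : t ≤ 0)
    (hXint : ∀ i, Integrable (fun ω => exp (t * X i ω)) μ)
    (hYint : ∀ j, Integrable (fun ω => exp (-t * Y j ω)) μ) (ε : ℝ) :
    μ.real {ω | (∑ i, X i ω) - (∑ j, Y j ω) ≤ ε}
      ≤ exp (-t * ε) * ((∏ i, mgf (X i) μ t) * ∏ j, mgf (Y j) μ (-t)) := by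
  have := hindep.isProbabilityMeasure
  set W : ι ⊕ κ → Ω → ℝ := Sum.elim X fun j => -Y j
  have hWindep : iIndepFun W μ := by
    convert hindep.comp (Sum.elim (fun _ => id) (fun _ => Neg.neg)) (by
      rintro (i | j); exacts [measurable_id, measurable_neg]) using 1
    ext (i | j) <;> rfl
  have hWm : ∀ k, Measurable (W k) := by rintro (i | j) <;> simp [W, hXm, hYm, Measurable.neg]
  have hWint : ∀ k, Integrable (fun ω => exp (t * W k ω)) μ := by
    rintro (i | j)
    · exact hXint i
    · simpa [W] using hYint j
  have hWsum : ∀ ω, (∑ k, W k) ω = (∑ i, X i ω) - (∑ j, Y j ω) := by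
    intro ω
    simp [W, Fintype.sum_sum_type, sub_eq_add_neg]
  have hchernoff := measure_le_le_exp_mul_mgf (μ := μ) (X := ∑ k, W k) ε ht
    (hWindep.integrable_exp_mul_sum hWm fun k _ => hWint k)
  simp only [hWsum, hWindep.mgf_sum hWm, Fintype.prod_sum_type] at hchernoff
  simpa [W, mgf_neg] using hchernoff

noncomputable def logOddsRatio (p q : ℝ) : ℝ :=
  log (p * (1 - q) / (q * (1 - p)))

section LogOddsRatio

variable {p q : ℝ}

lemma exp_logOddsRatio (hp0 : 0 < p) (hp1 : p < 1) (hq0 : 0 < q) (hq1 : q < 1) :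
    exp (logOddsRatio p q) = p * (1 - q) / (q * (1 - p)) :=
  exp_log (by have := sub_pos.2 hp1; have := sub_pos.2 hq1; positivity)

lemma logOddsRatio_pos (hq0 : 0 < q) (hqp : q < p) (hp1 : p < 1) : 0 < logOddsRatio p q := by
  refine log_pos ((one_lt_div (by nlinarith)).2 ?_)
  nlinarith

lemma KL_add_KL (hp0 : 0 < p) (hp1 : p < 1) (hq0 : 0 < q) (hq1 : q < 1) :
    KL p q + KL q p = (p - q) * logOddsRatio p q := by
  have h1p : 0 < 1 - p := sub_pos.2 hp1
  have h1q : 0 < 1 - q := sub_pos.2 hq1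
  rw [logOddsRatio, log_div (by positivity) (by positivity), log_mul hp0.ne' h1q.ne',
    log_mul hq0.ne' h1p.ne', KL, KL, log_div hp0.ne' hq0.ne',
    log_div h1p.ne' h1q.ne', log_div hq0.ne' hp0.ne', log_div h1q.ne' h1p.ne']
  ring

lemma bernoulli_mgf_neg_logOddsRatio_mul_mgf_logOddsRatio (hp0 : 0 < p) (hp1 : p < 1)
    (hq0 : 0 < q) (hq1 : q < 1) :
    (1 + (exp (-logOddsRatio p q) - 1) * p) * (1 + (exp (logOddsRatio p q) - 1) * q) = 1 := by
  have h1p : 0 < 1 - p := sub_pos.2 hp1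
  have h1q : 0 < 1 - q := sub_pos.2 hq1
  rw [exp_neg, exp_logOddsRatio hp0 hp1 hq0 hq1, inv_div]
  field_simp
  ring

end LogOddsRatio

/-- For mutually independent `X₁,…,Xₙ` i.i.d. Bernoulli(p) and `Y₁,…,Yₙ` i.i.d. Bernoulli(q)
with `q < p`, for every `c > 0`,
`P(Σ Xᵢ − Σ Yᵢ ≤ −c·n·(p−q)) ≤ exp(−c·n·(KL(p,q) + KL(q,p)))`. -/
theorem chernoff_diff_bernoulli_KL
    {Ω : Type*} [MeasureSpace Ω] [IsProbabilityMeasure (ℙ : Measure Ω)]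
    (n : ℕ) (p q : ℝ) (hq0 : 0 < q) (hqp : q < p) (hp1 : p < 1)
    (X Y : Fin n → Ω → ℝ)
    (hXm : ∀ i, Measurable (X i)) (hYm : ∀ i, Measurable (Y i))
    (hX01 : ∀ i ω, X i ω = 0 ∨ X i ω = 1) (hY01 : ∀ i ω, Y i ω = 0 ∨ Y i ω = 1)
    (hXp : ∀ i, ℙ {ω | X i ω = 1} = ENNReal.ofReal p)
    (hYq : ∀ i, ℙ {ω | Y i ω = 1} = ENNReal.ofReal q)
    (hindep : iIndepFun (Sum.elim X Y) ℙ) :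
    ∀ c : ℝ, 0 < c →
      ℙ {ω | (∑ i, X i ω) - (∑ i, Y i ω) ≤ -(c * n * (p - q))}
        ≤ ENNReal.ofReal (Real.exp (-(c * n * (KL p q + KL q p)))) := by
  intro c _
  have hp0 : 0 < p := hq0.trans hqp
  have hq1 : q < 1 := hqp.trans hp1
  have hchernoff := hindep.measureReal_sum_sub_sum_le_le hXm hYm
    (neg_nonpos.2 (logOddsRatio_pos hq0 hqp hp1).le)
    (fun i => integrable_exp_mul_of_eq_zero_or_eq_one (hXm i) (hX01 i) _)
    (fun j => integrable_exp_mul_of_eq_zero_or_eq_one (hYm j) (hY01 j) _) (-(c * n * (p - q)))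
  simp only [mgf_of_eq_zero_or_eq_one (hXm _) (hX01 _), mgf_of_eq_zero_or_eq_one (hYm _) (hY01 _),
    measureReal_def, hXp, hYq, ENNReal.toReal_ofReal hp0.le, ENNReal.toReal_ofReal hq0.le, neg_neg,
    Finset.prod_const, Finset.card_univ, Fintype.card_fin, ← mul_pow,
    bernoulli_mgf_neg_logOddsRatio_mul_mgf_logOddsRatio hp0 hp1 hq0 hq1, one_pow, mul_one]
    at hchernoff
  rw [ENNReal.le_ofReal_iff_toReal_le (measure_ne_top _ _) (exp_pos _).le,
    KL_add_KL hp0 hp1 hq0 hq1]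
  convert hchernoff using 2
  ring
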